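/- Let c₁ ≠ c₂ be points of the Euclidean plane with d = dist(c₁, c₂), let r₁, r₂ > 0 with r²(d) < 0, let u = (c₂ − c₁)/d, let p̂ be a unit vector with ⟪p̂, u⟫ = 0, and set c = c₁ + d₁(d)·u. Then the virtual intersection points q± = c ± √(−r²(d))·p̂ of the two circles lie on the rectangular hyperbola with center c₁, transverse axis along u and semitransverse axis r₁: ⟪q± − c₁, u⟫² − ⟪q± − c₁, p̂⟫² = r₁². -/

import Mathlib

noncomputable section

open scoped RealInnerProductSpace

/-- The squared (possibly negative) half-chord of the meet of two circles with radii
`r₁, r₂` and center distance `d`. -/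
def rSq (r₁ r₂ d : ℝ) : ℝ :=
  d ^ 2 * (r₁ ^ 2 * r₂ ^ 2 / d ^ 4 - (1 / 4) * (1 - r₁ ^ 2 / d ^ 2 - r₂ ^ 2 / d ^ 2) ^ 2)

/-- The signed distance from the first center to the chord midpoint. -/
def dOne (r₁ r₂ d : ℝ) : ℝ := (1 / 2) * (d + (r₁ ^ 2 - r₂ ^ 2) / d)

/-! The chord midpoint `c` sits at distance `d₁` from `c₁` along `u`, and `d₁² + r² = r₁²`
(Pythagoras on a genuine intersection, a polynomial identity in general). A point
`c₁ + d₁ u + t p̂` with `t² = −r²` therefore has `⟪·, u⟫² − ⟪·, p̂⟫² = d₁² − t² = d₁² + r² = r₁²`. -/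

theorem dOne_sq_add_rSq (r₁ r₂ : ℝ) {d : ℝ} (hd : d ≠ 0) :
    dOne r₁ r₂ d ^ 2 + rSq r₁ r₂ d = r₁ ^ 2 := by
  unfold dOne rSq
  field_simp
  ring

theorem norm_one_div_dist_smul_sub {E : Type*} [NormedAddCommGroup E] [NormedSpace ℝ E]
    {x y : E} (h : x ≠ y) : ‖(1 / dist x y) • (y - x)‖ = 1 := by
  rw [dist_eq_norm', one_div]
  exact norm_smul_inv_norm (sub_ne_zero.2 h.symm)

theorem inner_smul_add_smul_sq_sub_inner_sq {E : Type*} [NormedAddCommGroup E]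
    [InnerProductSpace ℝ E] {u p : E} (hu : ‖u‖ = 1) (hp : ‖p‖ = 1) (hpu : ⟪p, u⟫ = 0)
    (a t : ℝ) : ⟪a • u + t • p, u⟫ ^ 2 - ⟪a • u + t • p, p⟫ ^ 2 = a ^ 2 - t ^ 2 := by
  simp [inner_add_left, inner_smul_left, hu, hp, hpu, real_inner_comm p u]

theorem circles_virtual_meet_on_hyperbola_general
    (c₁ c₂ : EuclideanSpace ℝ (Fin 2)) (hc : c₁ ≠ c₂)
    (d r₁ r₂ : ℝ) (hd : d = dist c₁ c₂)
    (hrsq : rSq r₁ r₂ d < 0)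
    (u phat : EuclideanSpace ℝ (Fin 2)) (hu : u = (1 / d) • (c₂ - c₁))
    (hphat : ‖phat‖ = 1) (hperp : ⟪phat, u⟫ = 0)
    (c : EuclideanSpace ℝ (Fin 2)) (hcdef : c = c₁ + dOne r₁ r₂ d • u)
    (qplus qminus : EuclideanSpace ℝ (Fin 2))
    (hqplus : qplus = c + Real.sqrt (-(rSq r₁ r₂ d)) • phat)
    (hqminus : qminus = c - Real.sqrt (-(rSq r₁ r₂ d)) • phat) :
    ⟪qplus - c₁, u⟫ ^ 2 - ⟪qplus - c₁, phat⟫ ^ 2 = r₁ ^ 2 ∧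
      ⟪qminus - c₁, u⟫ ^ 2 - ⟪qminus - c₁, phat⟫ ^ 2 = r₁ ^ 2 := by
  have hd0 : d ≠ 0 := hd ▸ dist_ne_zero.2 hc
  have hu1 : ‖u‖ = 1 := hu ▸ hd ▸ norm_one_div_dist_smul_sub hc
  set s := Real.sqrt (-(rSq r₁ r₂ d))
  have hs : s ^ 2 = -rSq r₁ r₂ d := Real.sq_sqrt (by linarith)
  have on_hyperbola : ∀ t : ℝ, t ^ 2 = s ^ 2 →
      ⟪c + t • phat - c₁, u⟫ ^ 2 - ⟪c + t • phat - c₁, phat⟫ ^ 2 = r₁ ^ 2 := by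
    intro t ht
    rw [hcdef, add_sub_right_comm, add_sub_cancel_left,
      inner_smul_add_smul_sq_sub_inner_sq hu1 hphat hperp, ht, hs,
      ← dOne_sq_add_rSq r₁ r₂ hd0]
    ring
  subst hqplus hqminus
  exact ⟨on_hyperbola s rfl, by simpa only [neg_smul, ← sub_eq_add_neg] using on_hyperbola (-s) (neg_sq s)⟩

/-- When `r²(d) < 0`, the virtual intersection points `q± = c ± √(−r²(d))·phat` of two
circles lie on the rectangular hyperbola with center `c₁`, transverse axis along
`u = (c₂ − c₁)/d` and semitransverse axis `r₁`:
`⟪q± − c₁, u⟫² − ⟪q± − c₁, phat⟫² = r₁²`. -/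
theorem circles_virtual_meet_on_hyperbola
    (c₁ c₂ : EuclideanSpace ℝ (Fin 2)) (hc : c₁ ≠ c₂)
    (d r₁ r₂ : ℝ) (hd : d = dist c₁ c₂) (hr₁ : 0 < r₁) (hr₂ : 0 < r₂)
    (hrsq : rSq r₁ r₂ d < 0)
    (u phat : EuclideanSpace ℝ (Fin 2)) (hu : u = (1 / d) • (c₂ - c₁))
    (hphat : ‖phat‖ = 1) (hperp : ⟪phat, u⟫ = 0)
    (c : EuclideanSpace ℝ (Fin 2)) (hcdef : c = c₁ + dOne r₁ r₂ d • u)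
    (qplus qminus : EuclideanSpace ℝ (Fin 2))
    (hqplus : qplus = c + Real.sqrt (-(rSq r₁ r₂ d)) • phat)
    (hqminus : qminus = c - Real.sqrt (-(rSq r₁ r₂ d)) • phat) :
    ⟪qplus - c₁, u⟫ ^ 2 - ⟪qplus - c₁, phat⟫ ^ 2 = r₁ ^ 2 ∧
      ⟪qminus - c₁, u⟫ ^ 2 - ⟪qminus - c₁, phat⟫ ^ 2 = r₁ ^ 2 :=
  circles_virtual_meet_on_hyperbola_general c₁ c₂ hc d r₁ r₂ hd hrsq u phat hu hphat hperp c hcdef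
    qplus qminus hqplus hqminus
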